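/- Let h : {a}* → {a,b}* be the function that changes every other letter a to b, defined by h(a^{2n}) = (ab)ⁿ and h(a^{2n+1}) = (ab)ⁿ·a. Then h is not A-continuous: there exists a language L ⊆ {a,b}* recognized by a finite aperiodic monoid such that the preimage h⁻¹(L) is not recognized by any finite aperiodic monoid. -/

import Mathlib

/-- The two-letter alphabet `{a, b}`. -/
inductive AB : Type
  | a : AB
  | b : AB
deriving DecidableEq

/-- `wpow x k` is the `k`-fold concatenation `xᵏ` of the word `x`. -/
def wpow {A : Type*} (x : List A) : ℕ → List A
  | 0 => []
  | n + 1 => x ++ wpow x n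

/-- The function changing every other `a` to `b`:
`h(a^{2n}) = (ab)ⁿ` and `h(a^{2n+1}) = (ab)ⁿ·a`. -/
def hAlt (w : List Unit) : List AB :=
  wpow [AB.a, AB.b] (w.length / 2) ++ (if w.length % 2 = 1 then [AB.a] else [])

/-- A monoid is aperiodic if every element `x` satisfies `x^{n+1} = xⁿ` for
some `n`. -/
def IsAperiodic (M : Type) [Monoid M] : Prop :=
  ∀ x : M, ∃ n : ℕ, x ^ (n + 1) = x ^ n

/-- `L` is recognized by a finite aperiodic monoid. -/
def RecogByFinAperiodicMonoid {A : Type} (L : Set (List A)) : Prop :=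
  ∃ (M : Type) (_ : Fintype M) (_ : Monoid M), IsAperiodic M ∧
    ∃ (φ : FreeMonoid A →* M) (S : Set M),
      L = {w : List A | φ (FreeMonoid.ofList w) ∈ S}

/-!
In an aperiodic monoid the powers of every element are eventually constant, so a language
recognized by one cannot tell `uᵐ` from `uᵐ⁺¹` for large `m`. The language of words ending
in `b` is recognized by the idempotent monoid on `Option AB` with `x * y = y.or x`, which
remembers the last letter; its preimage under `hAlt` is the set of nonempty words of even
length, which does distinguish `aᵐ` from `aᵐ⁺¹` for every `m`.
-/

theorem length_wpow {A : Type*} (x : List A) (k : ℕ) : (wpow x k).length = k * x.length := by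
  induction k with
  | zero => simp [wpow]
  | succ k ih => simp only [wpow, List.length_append, ih]; ring

theorem getLast?_wpow_succ {A : Type*} (x : List A) (k : ℕ) :
    (wpow x (k + 1)).getLast? = x.getLast? := by
  induction k with
  | zero => simp [wpow]
  | succ k ih => rw [wpow, List.getLast?_append, ih, Option.or_self]

theorem getLast?_hAlt_of_odd {w : List Unit} (hw : w.length % 2 = 1) :
    (hAlt w).getLast? = some AB.a := by
  rw [hAlt, if_pos hw, List.getLast?_concat]

theorem getLast?_hAlt_of_even {w : List Unit} (hw : w.length % 2 = 0) (hne : w ≠ []) :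
    (hAlt w).getLast? = some AB.b := by
  obtain ⟨k, hk⟩ : ∃ k, w.length / 2 = k + 1 :=
    Nat.exists_eq_add_one.mpr (by have := List.length_pos_of_ne_nil hne; omega)
  rw [hAlt, if_neg (by omega), List.append_nil, hk, getLast?_wpow_succ]
  rfl

section Monoid

variable {M : Type} [Monoid M]

theorem pow_eq_pow_of_le_of_pow_succ_eq {x : M} {n : ℕ} (h : x ^ (n + 1) = x ^ n) :
    ∀ m, n ≤ m → x ^ m = x ^ n := by
  intro m hm
  induction m, hm using Nat.le_induction with
  | base => rfl
  | succ m _ ih => rw [pow_succ, ih, ← pow_succ, h]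

theorem IsAperiodic.of_mul_self (h : ∀ x : M, x * x = x) : IsAperiodic M :=
  fun x => ⟨1, by rw [pow_succ, pow_one, h]⟩

theorem map_ofList_wpow {A : Type} (φ : FreeMonoid A →* M) (u : List A) (k : ℕ) :
    φ (FreeMonoid.ofList (wpow u k)) = φ (FreeMonoid.ofList u) ^ k := by
  induction k with
  | zero => rw [wpow, pow_zero]; exact map_one φ
  | succ k ih => rw [wpow, FreeMonoid.ofList_append, map_mul, ih, pow_succ']

end Monoid

theorem RecogByFinAperiodicMonoid.exists_wpow_mem_iff {A : Type} {L : Set (List A)}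
    (hL : RecogByFinAperiodicMonoid L) (u : List A) :
    ∃ n, ∀ m, n ≤ m → (wpow u m ∈ L ↔ wpow u n ∈ L) := by
  obtain ⟨M, _, _, hM, φ, S, rfl⟩ := hL
  obtain ⟨n, hn⟩ := hM (φ (FreeMonoid.ofList u))
  refine ⟨n, fun m hm => ?_⟩
  simp only [Set.mem_ofPred_eq, map_ofList_wpow, pow_eq_pow_of_le_of_pow_succ_eq hn m hm]

def LastLetter (A : Type) : Type := Option A

namespace LastLetter

variable {A : Type}

instance [Fintype A] : Fintype (LastLetter A) := inferInstanceAs (Fintype (Option A))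

instance : Monoid (LastLetter A) where
  mul x y := Option.or y x
  one := (none : Option A)
  mul_assoc _ _ _ := Option.or_assoc.symm
  one_mul _ := Option.or_none
  mul_one _ := Option.none_or

theorem isAperiodic : IsAperiodic (LastLetter A) :=
  IsAperiodic.of_mul_self fun _ => Option.or_self

def hom : FreeMonoid A →* LastLetter A := FreeMonoid.lift (some : A → Option A)

theorem hom_ofList (w : List A) : hom (FreeMonoid.ofList w) = w.getLast? := by
  induction w with
  | nil => rfl
  | cons c w ih =>
    rw [FreeMonoid.ofList_cons, map_mul, ih, ← List.singleton_append, List.getLast?_append]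
    rfl

end LastLetter

instance : Fintype AB :=
  ⟨{AB.a, AB.b}, by rintro (_ | _) <;> simp⟩

theorem recogByFinAperiodicMonoid_getLast?_eq {A : Type} [Fintype A] (c : A) :
    RecogByFinAperiodicMonoid {w : List A | w.getLast? = some c} :=
  ⟨LastLetter A, inferInstance, inferInstance, LastLetter.isAperiodic, LastLetter.hom,
    {some c}, by ext w; simp only [Set.mem_ofPred_eq, LastLetter.hom_ofList]; rfl⟩

/-- `hAlt` is not A-continuous. -/
theorem hAlt_not_a_continuous :
    ∃ L : Set (List AB), RecogByFinAperiodicMonoid L ∧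
      ¬ RecogByFinAperiodicMonoid (hAlt ⁻¹' L) := by
  refine ⟨{w | w.getLast? = some AB.b}, recogByFinAperiodicMonoid_getLast?_eq AB.b, fun h => ?_⟩
  obtain ⟨n, hn⟩ := h.exists_wpow_mem_iff [()]
  have heven : hAlt (wpow [()] (2 * n + 2)) ∈ {w | w.getLast? = some AB.b} :=
    getLast?_hAlt_of_even (by simp [length_wpow])
      (List.ne_nil_of_length_pos (by simp [length_wpow]))
  have hodd : hAlt (wpow [()] (2 * n + 3)) ∉ {w | w.getLast? = some AB.b} := by
    simp [getLast?_hAlt_of_odd (w := wpow [()] (2 * n + 3)) (by simp [length_wpow])]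
  exact hodd ((hn _ (by omega)).mpr ((hn _ (by omega)).mp heven))
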